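/- (Lemma 3, finite sample guarantee for the quartet test.) Let A, B, C be fixed real matrices with α := min{ ‖B‖* − ‖A‖*, ‖C‖* − ‖A‖* } > 0, and let m > 0. Let Â, B̂, Ĉ be random matrices on a probability space such that for every ε > 0: ℙ( | ‖Â‖* − ‖A‖* | ≥ ε ) ≤ 2 e^{−mε²/8}, ℙ( | ‖B̂‖* − ‖B‖* | ≥ ε ) ≤ 2 e^{−mε²/8}, and ℙ( | ‖Ĉ‖* − ‖C‖* | ≥ ε ) ≤ 2 e^{−mε²/8}. Then the probability that the empirical nuclear norm test fails satisfies ℙ( ‖Â‖* ≥ ‖B̂‖* or ‖Â‖* ≥ ‖Ĉ‖* ) ≤ 8 e^{−mα²/32}; equivalently, with probability at least 1 − 8 e^{−mα²/32}, the test returns the correct quartet relation (‖Â‖* < ‖B̂‖* and ‖Â‖* < ‖Ĉ‖*). -/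

import Mathlib

open MeasureTheory

/-- The nuclear norm of a real matrix: the sum of its singular values. -/
noncomputable def nuclearNorm {α β : Type*} [Fintype α] [Fintype β] [DecidableEq β]
    (M : Matrix α β ℝ) : ℝ :=
  ∑ i, Real.sqrt ((show (M.transpose * M).IsHermitian by
    simpa [Matrix.conjTranspose_eq_transpose_of_trivial] using
      Matrix.isHermitian_conjTranspose_mul_self M).eigenvalues i)

theorem measure_le_le_deviation_add_deviation {Ω : Type*} [MeasurableSpace Ω] (μ : Measure Ω)
    (X Y : Ω → ℝ) {a b ε : ℝ} (hab : a + 2 * ε ≤ b) :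
    μ {ω | Y ω ≤ X ω} ≤ μ {ω | ε ≤ |X ω - a|} + μ {ω | ε ≤ |Y ω - b|} := by
  refine (measure_mono fun ω (hω : Y ω ≤ X ω) => ?_).trans (measure_union_le _ _)
  by_contra! h
  simp only [Set.mem_union, Set.mem_ofPred_eq, not_or, not_le, abs_lt] at h
  linarith [h.1.2, h.2.1]

theorem quartet_finite_sample_guarantee_general
    (d e : ℕ) (A B C : Matrix (Fin d) (Fin e) ℝ) (m : ℝ)
    (α : ℝ)
    (hα : α = min (nuclearNorm B - nuclearNorm A) (nuclearNorm C - nuclearNorm A))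
    (hαpos : 0 < α)
    (Ω : Type*) [MeasurableSpace Ω] (μ : Measure Ω)
    (Ahat Bhat Chat : Ω → Matrix (Fin d) (Fin e) ℝ)
    (hAhat : ∀ ε : ℝ, 0 < ε →
      μ {ω | ε ≤ |nuclearNorm (Ahat ω) - nuclearNorm A|} ≤
        ENNReal.ofReal (2 * Real.exp (-(m * ε ^ 2) / 8)))
    (hBhat : ∀ ε : ℝ, 0 < ε →
      μ {ω | ε ≤ |nuclearNorm (Bhat ω) - nuclearNorm B|} ≤
        ENNReal.ofReal (2 * Real.exp (-(m * ε ^ 2) / 8)))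
    (hChat : ∀ ε : ℝ, 0 < ε →
      μ {ω | ε ≤ |nuclearNorm (Chat ω) - nuclearNorm C|} ≤
        ENNReal.ofReal (2 * Real.exp (-(m * ε ^ 2) / 8))) :
    μ {ω | nuclearNorm (Bhat ω) ≤ nuclearNorm (Ahat ω) ∨
          nuclearNorm (Chat ω) ≤ nuclearNorm (Ahat ω)} ≤
      ENNReal.ofReal (8 * Real.exp (-(m * α ^ 2) / 32)) := by
  -- Test each comparison against deviations of size `α / 2`; at that size the tail bound
  -- `2 e^{-m ε² / 8}` is `2 e^{-m α² / 32}`, and the four deviation events give the factor 8.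
  have hε : 0 < α / 2 := by positivity
  have hAB : nuclearNorm A + 2 * (α / 2) ≤ nuclearNorm B := by
    linarith [hα ▸ min_le_left (nuclearNorm B - nuclearNorm A) (nuclearNorm C - nuclearNorm A)]
  have hAC : nuclearNorm A + 2 * (α / 2) ≤ nuclearNorm C := by
    linarith [hα ▸ min_le_right (nuclearNorm B - nuclearNorm A) (nuclearNorm C - nuclearNorm A)]
  set p := ENNReal.ofReal (2 * Real.exp (-(m * (α / 2) ^ 2) / 8))
  have hp : 0 ≤ 2 * Real.exp (-(m * (α / 2) ^ 2) / 8) := by positivity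
  calc _ ≤ μ {ω | nuclearNorm (Bhat ω) ≤ nuclearNorm (Ahat ω)} +
          μ {ω | nuclearNorm (Chat ω) ≤ nuclearNorm (Ahat ω)} := measure_union_le _ _
    _ ≤ (p + p) + (p + p) := by
      gcongr
      · exact (measure_le_le_deviation_add_deviation μ _ _ hAB).trans
          (add_le_add (hAhat _ hε) (hBhat _ hε))
      · exact (measure_le_le_deviation_add_deviation μ _ _ hAC).trans
          (add_le_add (hAhat _ hε) (hChat _ hε))
    _ = ENNReal.ofReal (8 * Real.exp (-(m * α ^ 2) / 32)) := by
      rw [← ENNReal.ofReal_add hp hp, ← ENNReal.ofReal_add (by positivity) (by positivity)]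
      ring_nf

/-- Lemma 3 (finite sample guarantee for the quartet test): if the empirical nuclear norms
concentrate around their population values, then the empirical nuclear norm quartet test fails
with probability at most `8 e^{−mα²/32}`. -/
theorem quartet_finite_sample_guarantee
    (d e : ℕ) (A B C : Matrix (Fin d) (Fin e) ℝ) (m : ℝ) (hm : 0 < m)
    (α : ℝ)
    (hα : α = min (nuclearNorm B - nuclearNorm A) (nuclearNorm C - nuclearNorm A))
    (hαpos : 0 < α)
    (Ω : Type*) [MeasurableSpace Ω] (μ : Measure Ω) [IsProbabilityMeasure μ]
    (Ahat Bhat Chat : Ω → Matrix (Fin d) (Fin e) ℝ)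
    (hAhat : ∀ ε : ℝ, 0 < ε →
      μ {ω | ε ≤ |nuclearNorm (Ahat ω) - nuclearNorm A|} ≤
        ENNReal.ofReal (2 * Real.exp (-(m * ε ^ 2) / 8)))
    (hBhat : ∀ ε : ℝ, 0 < ε →
      μ {ω | ε ≤ |nuclearNorm (Bhat ω) - nuclearNorm B|} ≤
        ENNReal.ofReal (2 * Real.exp (-(m * ε ^ 2) / 8)))
    (hChat : ∀ ε : ℝ, 0 < ε →
      μ {ω | ε ≤ |nuclearNorm (Chat ω) - nuclearNorm C|} ≤
        ENNReal.ofReal (2 * Real.exp (-(m * ε ^ 2) / 8))) :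
    μ {ω | nuclearNorm (Bhat ω) ≤ nuclearNorm (Ahat ω) ∨
          nuclearNorm (Chat ω) ≤ nuclearNorm (Ahat ω)} ≤
      ENNReal.ofReal (8 * Real.exp (-(m * α ^ 2) / 32)) :=
  quartet_finite_sample_guarantee_general d e A B C m α hα hαpos Ω μ Ahat Bhat Chat hAhat hBhat
    hChat
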